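/- arXiv:0710.0906 — 2 statements merged into one kernel-verified Lean document; each statement's English description precedes it below -/
import Mathlib

section
/- Let $\pi:\mathbb{C}((z))\to\mathbb{C}[[z]]$ be the projection along the subspace spanned by $\{z^j+z^{-j-2}: j\in\mathbb{Z}\}$. Then for any $f(z)\in\mathbb{C}((z))$ (with only finitely many negative-degree terms) and any $j\in\mathbb{Z}$, one has $\pi\big(f(z)(z^j+z^{-j})\big)=\pi\big(\pi(f(z))(z^j+z^{-j})\big)$. -/
noncomputable section

/-- The projection `π : ℂ((z)) → ℂ[[z]]` along the subspace spanned by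
`{z^j + z^{-j-2} : j ∈ ℤ}`: on coefficients, `π(f)_k = f_k - f_{-k-2}` for
`k ≥ 0` (subtracting, for each negative-degree term `a_{-m} z^{-m}` of `f`, the
kernel element `a_{-m} (z^{-m} + z^{m-2})`). -/
def laurentPi (f : LaurentSeries ℂ) : PowerSeries ℂ :=
  PowerSeries.mk fun k => f.coeff (k : ℤ) - f.coeff (-(k : ℤ) - 2)

/-!
The kernel of `π` consists of the Laurent series whose coefficients are symmetric
about `-1`, i.e. `a_n = a_{-n-2}`. Multiplying by `z^j + z^{-j}` preserves this symmetry, since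
it replaces `a_n` by `a_{n-j} + a_{n+j}`. As `f - π(f)` lies in the kernel, so does
`(f - π(f)) (z^j + z^{-j})`, and the claim follows from the linearity of `π`.
-/

namespace LaurentSeries

def symmAboutNegOne (R : Type*) [Semiring R] : Submodule R (LaurentSeries R) where
  carrier := {x | ∀ n : ℤ, x.coeff n = x.coeff (-n - 2)}
  zero_mem' _ := rfl
  add_mem' hx hy n := by simp only [HahnSeries.coeff_add, hx n, hy n]
  smul_mem' r x hx n := by simp only [HahnSeries.coeff_smul, hx n]

variable {R : Type*} [Semiring R]

theorem mem_symmAboutNegOne_iff {x : LaurentSeries R} :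
    x ∈ symmAboutNegOne R ↔ ∀ k : ℕ, x.coeff k = x.coeff (-(k : ℤ) - 2) := by
  refine ⟨fun hx k => hx k, fun hx n => ?_⟩
  rcases lt_trichotomy n (-1) with hn | rfl | hn
  · obtain ⟨k, rfl⟩ : ∃ k : ℕ, n = -(k : ℤ) - 2 := ⟨(-n - 2).toNat, by omega⟩
    rw [show -(-(k : ℤ) - 2) - 2 = k by ring, hx k]
  · norm_num
  · obtain ⟨k, rfl⟩ : ∃ k : ℕ, n = k := ⟨n.toNat, by omega⟩
    exact hx k

theorem mul_single_add_single_neg_mem_symmAboutNegOne {x : LaurentSeries R}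
    (hx : x ∈ symmAboutNegOne R) (j : ℤ) :
    x * (HahnSeries.single j 1 + HahnSeries.single (-j) 1) ∈ symmAboutNegOne R := by
  intro n
  simp only [mul_add, HahnSeries.coeff_add, HahnSeries.coeff_mul_single, mul_one]
  rw [hx (n - j), hx (n - -j), add_comm]
  ring_nf

end LaurentSeries

open LaurentSeries

theorem laurentPi_sub (x y : LaurentSeries ℂ) :
    laurentPi (x - y) = laurentPi x - laurentPi y := by
  ext k
  simp only [laurentPi, PowerSeries.coeff_mk, map_sub, HahnSeries.coeff_sub]
  ring

theorem laurentPi_eq_zero_iff {x : LaurentSeries ℂ} :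
    laurentPi x = 0 ↔ x ∈ symmAboutNegOne ℂ := by
  simp only [mem_symmAboutNegOne_iff, PowerSeries.ext_iff, laurentPi, PowerSeries.coeff_mk,
    map_zero, sub_eq_zero]

theorem sub_laurentPi_mem_symmAboutNegOne (f : LaurentSeries ℂ) :
    f - HahnSeries.ofPowerSeries ℤ ℂ (laurentPi f) ∈ symmAboutNegOne ℂ := by
  refine mem_symmAboutNegOne_iff.2 fun k => ?_
  rw [HahnSeries.coeff_sub, HahnSeries.coeff_sub, coeff_coe_powerSeries, PowerSeries.coeff_coe,
    if_pos (by omega), laurentPi, PowerSeries.coeff_mk]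
  ring

/-- for any Laurent series `f` and any `j ∈ ℤ`,
`π(f · (z^j + z^{-j})) = π(π(f) · (z^j + z^{-j}))`. -/
theorem stmt_15 (f : LaurentSeries ℂ) (j : ℤ) :
    laurentPi (f * (HahnSeries.single j (1 : ℂ) + HahnSeries.single (-j) (1 : ℂ))) =
      laurentPi ((HahnSeries.ofPowerSeries ℤ ℂ (laurentPi f)) *
        (HahnSeries.single j (1 : ℂ) + HahnSeries.single (-j) (1 : ℂ))) := by
  rw [← sub_eq_zero, ← laurentPi_sub, ← sub_mul, laurentPi_eq_zero_iff]
  exact mul_single_add_single_neg_mem_symmAboutNegOne (sub_laurentPi_mem_symmAboutNegOne f) j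

end
end

section
/- Define, for $a,b\in\frac12+\mathbb{Z}$ and $s\in\{0,1\}$, the Laurent series $\psi^s_{a,b}(z)=\frac{z^{5+s}(z^{3a+b}-z^{a+3b}-z^{-a-3b}+z^{-3a-b})-z^{6+s}(z^{3a-b}-z^{-a+3b}-z^{a-3b}+z^{-3a+b})}{(1-z^2)^2(1-z^4)(1-z^6)}$. Then $\psi^s_{a,b}$ satisfies: (i) $\psi^s_{a,b}(z)(z^3+z+z^{-1}+z^{-3})=\psi^s_{a+1,b}+\psi^s_{a-1,b}+\psi^s_{a,b+1}+\psi^s_{a,b-1}$; (ii) $\psi^s_{a,b}(z)(z^4+z^2+1+z^{-2}+z^{-4})=\psi^s_{a+1,b+1}+\psi^s_{a+1,b-1}+\psi^s_{a-1,b+1}+\psi^s_{a-1,b-1}+\psi^s_{a,b}$; (iii) $\psi^s_{a,b}=-\psi^s_{b,a}=-\psi^s_{-b,-a}=\psi^s_{-a,-b}$; (iv) $\psi^s_{3/2,1/2}=\frac{z^s}{1-z^6}$ and $\psi^s_{3/2,-1/2}=\frac{z^{3+s}}{1-z^6}$. Moreover, $\psi^s_{a,b}$ is the unique family of Laurent series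 satisfying (i)–(iv). -/
noncomputable section

/-- the variable `z` of the Laurent series field `ℂ((z))`. -/
def zL : LaurentSeries ℂ := HahnSeries.single 1 1

/-- The family `ψ^s_{a,b}` of Laurent series, for half-integers `a = m + 1/2`,
`b = n + 1/2` (`m n : ℤ`):`ψ^s_{a,b}(z) =
 (z^{5+s}(z^{3a+b} - z^{a+3b} - z^{-a-3b} + z^{-3a-b})
   - z^{6+s}(z^{3a-b} - z^{-a+3b} - z^{a-3b} + z^{-3a+b}))
 / ((1-z²)²(1-z⁴)(1-z⁶))`.
Note `3a+b = 3m+n+2`, `a+3b = m+3n+2`, `3a-b = 3m-n+1`, `a-3b = m-3n-1`. -/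
def psiF (s : ℕ) (m n : ℤ) : LaurentSeries ℂ :=
  (zL ^ ((5 : ℤ) + s) *
      (zL ^ (3 * m + n + 2) - zL ^ (m + 3 * n + 2)
        - zL ^ (-m - 3 * n - 2) + zL ^ (-3 * m - n - 2))
    - zL ^ ((6 : ℤ) + s) *
      (zL ^ (3 * m - n + 1) - zL ^ (-m + 3 * n + 1)
        - zL ^ (m - 3 * n - 1) + zL ^ (-3 * m + n - 1)))
  / ((1 - zL ^ (2 : ℤ)) ^ 2 * (1 - zL ^ (4 : ℤ)) * (1 - zL ^ (6 : ℤ)))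

/-- Conditions (i)–(iv) on a family `Ψ_{a,b}`, `a = m + 1/2`, `b = n + 1/2`:
(i) multiplication by `z³+z+z⁻¹+z⁻³` gives the four neighbours `a±1, b±1`;
(ii) multiplication by `z⁴+z²+1+z⁻²+z⁻⁴` gives the four diagonal neighbours
together with `Ψ_{a,b}`;
(iii) `Ψ_{a,b} = -Ψ_{b,a} = -Ψ_{-b,-a} = Ψ_{-a,-b}` (on indices:
`(b,a) ↔ (n,m)`, `(-b,-a) ↔ (-n-1,-m-1)`, `(-a,-b) ↔ (-m-1,-n-1)`);
(iv) `Ψ_{3/2,1/2} = z^s/(1-z⁶)`, `Ψ_{3/2,-1/2} = z^{3+s}/(1-z⁶)`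
(on indices: `(1,0)` and `(1,-1)`). -/
def psiProps (s : ℕ) (Ψ : ℤ → ℤ → LaurentSeries ℂ) : Prop :=
  (∀ m n : ℤ, Ψ m n * (zL ^ (3 : ℤ) + zL + zL ^ (-1 : ℤ) + zL ^ (-3 : ℤ)) =
      Ψ (m + 1) n + Ψ (m - 1) n + Ψ m (n + 1) + Ψ m (n - 1)) ∧
  (∀ m n : ℤ, Ψ m n *
        (zL ^ (4 : ℤ) + zL ^ (2 : ℤ) + 1 + zL ^ (-2 : ℤ) + zL ^ (-4 : ℤ)) =
      Ψ (m + 1) (n + 1) + Ψ (m + 1) (n - 1) + Ψ (m - 1) (n + 1)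
        + Ψ (m - 1) (n - 1) + Ψ m n) ∧
  (∀ m n : ℤ, Ψ m n = -Ψ n m ∧ Ψ m n = -Ψ (-n - 1) (-m - 1) ∧
      Ψ m n = Ψ (-m - 1) (-n - 1)) ∧
  (Ψ 1 0 = zL ^ (s : ℤ) / (1 - zL ^ (6 : ℤ)) ∧
      Ψ 1 (-1) = zL ^ ((3 : ℤ) + s) / (1 - zL ^ (6 : ℤ)))

/-! Writing `u = z^m` and `v = z^n`, the relations (i)–(iv) for `ψ` become identities between
rational functions of `z, u, v`, checked by clearing denominators.

For uniqueness, the difference `Δ` of two solutions satisfies the homogeneous relations and vanishes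
at `(3/2, ±1/2)`. Antisymmetry under `(a, b) ↦ (b, a)` and `(a, b) ↦ (-b, -a)` makes `Δ` vanish on the
lines `b = ±a`; relation (i) at the row `a = p + 1/2` determines the row `a = p + 3/2` of the cone
`|b| ≤ a` from the two rows below, except at its two outermost interior points, which come from (ii).
Hence `Δ` vanishes on the cone, and by (iii) on its images, which cover all indices. -/

section AlternatingEigenfamily

variable {R : Type*} [Ring R]

/-- A family `Ψ_{a,b}` (`a = m + 1/2`, `b = n + 1/2`) satisfying the homogeneous relations
(i)–(iii) with multipliers `c` and `d`. -/
structure IsAlternatingEigenfamily (c d : R) (Ψ : ℤ → ℤ → R) : Prop where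
  mul_adj : ∀ m n : ℤ, Ψ m n * c = Ψ (m + 1) n + Ψ (m - 1) n + Ψ m (n + 1) + Ψ m (n - 1)
  mul_diag : ∀ m n : ℤ, Ψ m n * d =
    Ψ (m + 1) (n + 1) + Ψ (m + 1) (n - 1) + Ψ (m - 1) (n + 1) + Ψ (m - 1) (n - 1) + Ψ m n
  swap : ∀ m n : ℤ, Ψ m n = -Ψ n m
  reflect : ∀ m n : ℤ, Ψ m n = -Ψ (-n - 1) (-m - 1)

namespace IsAlternatingEigenfamily

variable {c d : R} {Ψ Φ : ℤ → ℤ → R}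

theorem sub (hΨ : IsAlternatingEigenfamily c d Ψ) (hΦ : IsAlternatingEigenfamily c d Φ) :
    IsAlternatingEigenfamily c d (Ψ - Φ) where
  mul_adj m n := by
    simp only [Pi.sub_apply, sub_mul, hΨ.mul_adj, hΦ.mul_adj]
    abel
  mul_diag m n := by
    simp only [Pi.sub_apply, sub_mul, hΨ.mul_diag, hΦ.mul_diag]
    abel
  swap m n := by simp only [Pi.sub_apply, hΨ.swap m n, hΦ.swap m n, neg_sub_neg, neg_sub]
  reflect m n := by simp only [Pi.sub_apply, hΨ.reflect m n, hΦ.reflect m n, neg_sub_neg, neg_sub]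

/-- `Ψ` vanishes on the row `a = p + 1/2` of the cone `|b| ≤ a`. -/
def RowZero (Ψ : ℤ → ℤ → R) (p : ℤ) : Prop :=
  ∀ q : ℤ, -p - 1 ≤ q → q ≤ p → Ψ p q = 0

variable [NoZeroDivisors R] [CharZero R]

theorem apply_self_eq_zero (h : IsAlternatingEigenfamily c d Ψ) (m : ℤ) : Ψ m m = 0 :=
  CharZero.eq_neg_self_iff.mp (h.swap m m)

theorem apply_neg_sub_one_eq_zero (h : IsAlternatingEigenfamily c d Ψ) (m : ℤ) :
    Ψ m (-m - 1) = 0 :=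
  CharZero.eq_neg_self_iff.mp (by simpa using h.reflect m (-m - 1))

theorem rowZero_add_one (h : IsAlternatingEigenfamily c d Ψ) {M : ℤ} (hM : 1 ≤ M)
    (h₀ : RowZero Ψ (M - 1)) (h₁ : RowZero Ψ M) : RowZero Ψ (M + 1) := by
  have inner : ∀ q : ℤ, -M ≤ q → q ≤ M - 1 → Ψ (M + 1) q = 0 := by
    intro q hq₁ hq₂
    have e := h.mul_adj M q
    rw [h₁ q (by omega) (by omega), h₀ q (by omega) hq₂, h₁ (q + 1) (by omega) (by omega),
      h₁ (q - 1) (by omega) (by omega), zero_mul] at e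
    simpa using e.symm
  have top : Ψ (M + 1) M = 0 := by
    have e := h.mul_diag M (M - 1)
    have hswap : Ψ (M - 1) M = 0 := by
      rw [h.swap, h₁ (M - 1) (by omega) (by omega), neg_zero]
    rw [sub_add_cancel, h₁ (M - 1) (by omega) (by omega), zero_mul, hswap,
      inner (M - 1 - 1) (by omega) (by omega), h₀ (M - 1 - 1) (by omega) (by omega)] at e
    simpa using e.symm
  have bottom : Ψ (M + 1) (-M - 1) = 0 := by
    have e := h.mul_diag M (-M)
    have hreflect : Ψ (M - 1) (-M - 1) = 0 := by
      rw [h.reflect, show -(-M - 1) - 1 = M by ring, show -(M - 1) - 1 = -M by ring,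
        h₁ (-M) (by omega) (by omega), neg_zero]
    rw [h₁ (-M) (by omega) (by omega), zero_mul, hreflect,
      inner (-M + 1) (by omega) (by omega), h₀ (-M + 1) (by omega) (by omega)] at e
    simpa using e.symm
  intro q hq₁ hq₂
  obtain rfl | rfl | rfl | rfl | ⟨hq₁', hq₂'⟩ : q = M + 1 ∨ q = -(M + 1) - 1 ∨ q = M ∨
      q = -M - 1 ∨ (-M ≤ q ∧ q ≤ M - 1) := by omega
  · exact h.apply_self_eq_zero _
  · exact h.apply_neg_sub_one_eq_zero _
  · exact top
  · exact bottom
  · exact inner q hq₁' hq₂'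

theorem eq_zero (h : IsAlternatingEigenfamily c d Ψ) (h₁₀ : Ψ 1 0 = 0) (h₁₁ : Ψ 1 (-1) = 0) :
    Ψ = 0 := by
  have rows : ∀ k : ℕ, RowZero Ψ k ∧ RowZero Ψ (k + 1) := by
    intro k
    induction k with
    | zero =>
      constructor
      · intro q hq₁ hq₂
        obtain rfl | rfl : q = -0 - 1 ∨ q = 0 := by omega
        exacts [h.apply_neg_sub_one_eq_zero 0, h.apply_self_eq_zero 0]
      · intro q hq₁ hq₂
        obtain rfl | rfl | rfl | rfl : q = -1 - 1 ∨ q = -1 ∨ q = 0 ∨ q = 1 := by omega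
        exacts [h.apply_neg_sub_one_eq_zero 1, h₁₁, h₁₀, h.apply_self_eq_zero 1]
    | succ k ih =>
      refine ⟨by exact_mod_cast ih.2, ?_⟩
      exact_mod_cast h.rowZero_add_one (M := k + 1) (by omega) (by simpa using ih.1) ih.2
  have cone : ∀ p q : ℤ, 0 ≤ p → -p - 1 ≤ q → q ≤ p → Ψ p q = 0 := by
    intro p q hp
    lift p to ℕ using hp
    exact (rows p).1 q
  funext m n
  show Ψ m n = 0
  rcases (by omega : (0 ≤ m ∧ -m - 1 ≤ n ∧ n ≤ m) ∨ (0 ≤ n ∧ -n - 1 ≤ m ∧ m ≤ n) ∨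
      (0 ≤ -n - 1 ∧ -(-n - 1) - 1 ≤ -m - 1 ∧ -m - 1 ≤ -n - 1) ∨
      (0 ≤ -m - 1 ∧ -(-m - 1) - 1 ≤ -n - 1 ∧ -n - 1 ≤ -m - 1)) with
    ⟨hp, hq₁, hq₂⟩ | ⟨hp, hq₁, hq₂⟩ | ⟨hp, hq₁, hq₂⟩ | ⟨hp, hq₁, hq₂⟩
  · exact cone m n hp hq₁ hq₂
  · rw [h.swap, cone n m hp hq₁ hq₂, neg_zero]
  · rw [h.reflect, cone _ _ hp hq₁ hq₂, neg_zero]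
  · rw [h.swap, h.reflect, neg_neg, cone _ _ hp hq₁ hq₂]

theorem eq_of_apply_eq (hΨ : IsAlternatingEigenfamily c d Ψ)
    (hΦ : IsAlternatingEigenfamily c d Φ) (h₁₀ : Ψ 1 0 = Φ 1 0) (h₁₁ : Ψ 1 (-1) = Φ 1 (-1)) :
    Ψ = Φ :=
  sub_eq_zero.mp <| (hΨ.sub hΦ).eq_zero (sub_eq_zero.mpr h₁₀) (sub_eq_zero.mpr h₁₁)

end IsAlternatingEigenfamily

end AlternatingEigenfamily

instance {Γ R : Type*} [AddCommMonoid Γ] [PartialOrder Γ] [IsOrderedCancelAddMonoid Γ]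
    [NonAssocSemiring R] [CharZero R] : CharZero (HahnSeries Γ R) :=
  charZero_of_injective_ringHom HahnSeries.C_injective

theorem zL_ne_zero : zL ≠ 0 :=
  HahnSeries.single_ne_zero one_ne_zero

theorem one_sub_zL_pow_ne_zero {k : ℕ} (hk : k ≠ 0) : 1 - zL ^ k ≠ 0 := by
  intro h
  have h₀ := congrArg (HahnSeries.coeff · 0) h
  have hk' : (0 : ℤ) ≠ k := by omega
  simp [zL, HahnSeries.single_pow, hk'] at h₀

section psiF

variable (s : ℕ) (m n : ℤ)

theorem psiF_mul_adj :
    psiF s m n * (zL ^ (3 : ℤ) + zL + zL ^ (-1 : ℤ) + zL ^ (-3 : ℤ)) =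
      psiF s (m + 1) n + psiF s (m - 1) n + psiF s m (n + 1) + psiF s m (n - 1) := by
  have := zL_ne_zero
  simp only [psiF, zpow_add₀ this, zpow_sub₀ this, zpow_mul', zpow_neg, zpow_natCast, zpow_ofNat]
  field_simp
  ring

theorem psiF_mul_diag :
    psiF s m n * (zL ^ (4 : ℤ) + zL ^ (2 : ℤ) + 1 + zL ^ (-2 : ℤ) + zL ^ (-4 : ℤ)) =
      psiF s (m + 1) (n + 1) + psiF s (m + 1) (n - 1) + psiF s (m - 1) (n + 1)
        + psiF s (m - 1) (n - 1) + psiF s m n := by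
  have := zL_ne_zero
  simp only [psiF, zpow_add₀ this, zpow_sub₀ this, zpow_mul', zpow_neg, zpow_natCast, zpow_ofNat]
  field_simp
  ring

theorem psiF_swap : psiF s m n = -psiF s n m := by
  simp only [psiF]
  ring_nf

theorem psiF_reflect : psiF s m n = -psiF s (-n - 1) (-m - 1) := by
  simp only [psiF]
  ring_nf

theorem psiF_neg_sub_one : psiF s m n = psiF s (-m - 1) (-n - 1) := by
  simp only [psiF]
  ring_nf

theorem psiF_one_zero : psiF s 1 0 = zL ^ (s : ℤ) / (1 - zL ^ (6 : ℤ)) := by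
  have := zL_ne_zero
  norm_num [psiF, zpow_add₀ this, zpow_natCast, zpow_neg]
  field_simp [one_sub_zL_pow_ne_zero]
  ring

theorem psiF_one_neg_one : psiF s 1 (-1) = zL ^ ((3 : ℤ) + s) / (1 - zL ^ (6 : ℤ)) := by
  have := zL_ne_zero
  norm_num [psiF, zpow_add₀ this, zpow_natCast, zpow_neg]
  field_simp [one_sub_zL_pow_ne_zero]
  ring

end psiF

theorem psiProps_psiF (s : ℕ) : psiProps s (psiF s) :=
  ⟨psiF_mul_adj s, psiF_mul_diag s,
    fun m n => ⟨psiF_swap s m n, psiF_reflect s m n, psiF_neg_sub_one s m n⟩,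
    psiF_one_zero s, psiF_one_neg_one s⟩

theorem psiProps.isAlternatingEigenfamily {s : ℕ} {Ψ : ℤ → ℤ → LaurentSeries ℂ}
    (h : psiProps s Ψ) :
    IsAlternatingEigenfamily (zL ^ (3 : ℤ) + zL + zL ^ (-1 : ℤ) + zL ^ (-3 : ℤ))
      (zL ^ (4 : ℤ) + zL ^ (2 : ℤ) + 1 + zL ^ (-2 : ℤ) + zL ^ (-4 : ℤ)) Ψ :=
  ⟨h.1, h.2.1, fun m n => (h.2.2.1 m n).1, fun m n => (h.2.2.1 m n).2.1⟩

theorem stmt_18_general (s : ℕ) :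
    psiProps s (psiF s) ∧ ∀ Ψ : ℤ → ℤ → LaurentSeries ℂ, psiProps s Ψ → Ψ = psiF s := by
  refine ⟨psiProps_psiF s, fun Ψ hΨ => ?_⟩
  have hψ := psiProps_psiF s
  exact hΨ.isAlternatingEigenfamily.eq_of_apply_eq hψ.isAlternatingEigenfamily
    (hΨ.2.2.2.1.trans hψ.2.2.2.1.symm) (hΨ.2.2.2.2.trans hψ.2.2.2.2.symm)

/-- the explicit family `ψ^s_{a,b}` satisfies (i)–(iv), and is the
unique family of Laurent series doing so. -/
theorem stmt_18 (s : ℕ) (hs : s ≤ 1) :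
    psiProps s (psiF s) ∧ ∀ Ψ : ℤ → ℤ → LaurentSeries ℂ, psiProps s Ψ → Ψ = psiF s :=
  stmt_18_general s

end
end
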